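/- arXiv:1610.07377 — 2 statements merged into one kernel-verified Lean document; each statement's English description precedes it below -/
import Mathlib

section
/- Let $\gamma(t) = \begin{pmatrix} a(t) & b(t) \\ c(t) & d(t) \end{pmatrix}$ be a matrix with entries in $\mathbb{C}[[t]]$ and determinant $1$, such that for all $t$ the matrix $\gamma(t)$ fixes the pair of points $([0 : t^{-1}], [t : t^{-1}]) \in \mathbb{P}^1 \times \mathbb{P}^1$ under the diagonal linear action of $SL(2)$ on $\mathbb{P}^1 \times \mathbb{P}^1$. Then $b(t) = 0$, $a(t)d(t) = 1$, $a(t) - d(t) = t^2 c(t)$, and the constant terms satisfy $a_0 = d_0 \in \{1,-1\}$. Consequently the limit $\gamma(0)$ belongs to the group $U_2 = \left\{ \begin{pmatrix} \lambda & 0 \\ u & \lambda \end{pmatrix} : u \in \mathbb{C},\ \lambda^2 = 1 \right\}$. -/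
/-!
Fixing `[0 : t⁻¹]` forces `b = 0`; fixing `[t : t⁻¹]` then makes the eigenvalue on that vector equal
to `a` and gives `c t² + d = a`. Everything else follows from `det γ = a d = 1` by comparing
constant terms.
-/

open PowerSeries

theorem eq_zero_and_eq_mul_sq_add_of_fix {F : Type*} [Field F] {a b c d t α β : F}
    (ht : t ≠ 0) (h₀ : a * 0 + b * t⁻¹ = α * 0) (h₁ : a * t + b * t⁻¹ = β * t)
    (h₂ : c * t + d * t⁻¹ = β * t⁻¹) : b = 0 ∧ a = c * t ^ 2 + d := by
  have hb : b = 0 := by simpa [ht] using h₀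
  subst hb
  have haβ : a = β := by simpa [ht] using h₁
  subst haβ
  refine ⟨rfl, ?_⟩
  field_simp at h₂
  linear_combination -h₂

theorem PowerSeries.coeff_zero_eq_of_sub_eq_X_mul {R : Type*} [Ring R] {f g h : R⟦X⟧}
    (hfg : f - g = X * h) : coeff 0 f = coeff 0 g := by
  rw [← sub_eq_zero, ← map_sub, hfg, coeff_zero_X_mul]

/-- If `γ(t) = !![a t, b t; c t, d t] ∈ SL(2, ℂ[[t]])` fixes the pair of points
`([0 : t⁻¹], [t : t⁻¹]) ∈ ℙ¹ × ℙ¹` (i.e. the image of each homogeneous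
coordinate vector is a nonzero scalar multiple of itself, computed in the
field of formal Laurent series), then `b = 0`, `a d = 1`, `a - d = t² c`,
the constant terms satisfy `a₀ = d₀ ∈ {1,-1}`, and `γ(0)` belongs to
`U₂ = {!![λ, 0; u, λ] : u ∈ ℂ, λ² = 1}`. -/
theorem stmt3 (a b c d : PowerSeries ℂ) (hdet : a * d - b * c = 1)
    (T : LaurentSeries ℂ) (hT : T = (PowerSeries.X : PowerSeries ℂ))
    (h1 : ∃ α : LaurentSeries ℂ, α ≠ 0 ∧
      (a : LaurentSeries ℂ) * 0 + (b : LaurentSeries ℂ) * T⁻¹ = α * 0 ∧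
      (c : LaurentSeries ℂ) * 0 + (d : LaurentSeries ℂ) * T⁻¹ = α * T⁻¹)
    (h2 : ∃ β : LaurentSeries ℂ, β ≠ 0 ∧
      (a : LaurentSeries ℂ) * T + (b : LaurentSeries ℂ) * T⁻¹ = β * T ∧
      (c : LaurentSeries ℂ) * T + (d : LaurentSeries ℂ) * T⁻¹ = β * T⁻¹) :
    b = 0 ∧ a * d = 1 ∧ a - d = PowerSeries.X ^ 2 * c ∧
      PowerSeries.coeff 0 a = PowerSeries.coeff 0 d ∧
      (PowerSeries.coeff 0 a = 1 ∨ PowerSeries.coeff 0 a = -1) ∧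
      ∃ lam u : ℂ, lam ^ 2 = 1 ∧
        !![PowerSeries.coeff 0 a, PowerSeries.coeff 0 b;
           PowerSeries.coeff 0 c, PowerSeries.coeff 0 d] = !![lam, 0; u, lam] := by
  obtain ⟨α, -, h1a, -⟩ := h1
  obtain ⟨β, -, h2a, h2b⟩ := h2
  have hT0 : T ≠ 0 := hT ▸ (map_ne_zero_iff _ HahnSeries.ofPowerSeries_injective).mpr X_ne_zero
  obtain ⟨hbL, hac⟩ := eq_zero_and_eq_mul_sq_add_of_fix hT0 h1a h2a h2b
  have hb : b = 0 := (map_eq_zero_iff _ HahnSeries.ofPowerSeries_injective).mp hbL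
  have had : a - d = X ^ 2 * c :=
    HahnSeries.ofPowerSeries_injective (Γ := ℤ) (by push_cast; rw [← hT, hac]; ring)
  have had1 : a * d = 1 := by simpa [hb] using hdet
  have hc0 : coeff 0 a = coeff 0 d := coeff_zero_eq_of_sub_eq_X_mul (h := X * c) (by rw [had]; ring)
  have hsq : coeff 0 a * coeff 0 a = 1 :=
    (congrArg (coeff 0 a * ·) hc0).trans (by simpa using congrArg constantCoeff had1)
  refine ⟨hb, had1, had, hc0, mul_self_eq_one_iff.mp hsq, coeff 0 a, coeff 0 c, (sq _).trans hsq, ?_⟩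
  rw [hb, hc0]
  simp
end

section
/- Let $\gamma(t) = \begin{pmatrix} a(t) & b(t) \\ c(t) & d(t) \end{pmatrix}$ be a matrix with entries in $\mathbb{C}[[t]]$ and determinant $1$, and suppose there exists $\mu \in \mathbb{C}^*$ such that $\gamma(t) \begin{pmatrix} 0 & t \\ t^{-1} & 0 \end{pmatrix} = \begin{pmatrix} 0 & \mu t \\ \mu t^{-1} & 0 \end{pmatrix} \gamma(t)$ for all $t$. Then $\mu^2 = 1$, the first two coefficients of $b(t)$ vanish, and the limit $\gamma(0)$ belongs to the group $U_4 = \left\{ \begin{pmatrix} \lambda & 0 \\ u & \lambda^{-1} \end{pmatrix} : u \in \mathbb{C},\ \lambda^4 = 1 \right\}$. -/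
open Matrix PowerSeries

/-!
Comparing entries, `γ J = μ J γ` with `J = !![0, t; t⁻¹, 0]` says `a = μ d`, `d = μ a` and
`b = μ t² c`. The last relation kills the first two coefficients of `b`, so the determinant
condition reduces at `t = 0` to `a₀ d₀ = 1`. Then `a₀ = μ² a₀` with `a₀ ≠ 0` gives `μ² = 1`, and
`a₀² = μ a₀ d₀ = μ` gives `a₀⁴ = 1`.
-/

theorem eq_mul_of_mul_antidiag_eq_smul_antidiag_mul {K : Type*} [Field K] {a b c d T μ : K}
    (hT : T ≠ 0)
    (h : !![a, b; c, d] * !![0, T; T⁻¹, 0] = (μ • !![0, T; T⁻¹, 0]) * !![a, b; c, d]) :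
    a = μ * d ∧ d = μ * a ∧ b = μ * T ^ 2 * c := by
  have h00 := congrFun (congrFun h 0) 0
  have h01 := congrFun (congrFun h 0) 1
  have h10 := congrFun (congrFun h 1) 0
  simp only [mul_apply, Fin.sum_univ_two, Matrix.smul_apply, of_apply, cons_val', cons_val_zero,
    cons_val_one, empty_val', cons_val_fin_one, smul_eq_mul] at h00 h01 h10
  refine ⟨?_, ?_, ?_⟩
  · exact mul_right_cancel₀ hT (by linear_combination h01)
  · exact mul_right_cancel₀ (inv_ne_zero hT) (by linear_combination h10)
  · linear_combination T * h00 - b * mul_inv_cancel₀ hT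

theorem coeff_mul_X_sq_mul_of_lt_two {R : Type*} [Semiring R] (f g : PowerSeries R) {n : ℕ}
    (hn : n < 2) : coeff n (f * X ^ 2 * g) = 0 := by
  rw [(commute_X_pow f 2).eq, mul_assoc, coeff_X_pow_mul', if_neg (by omega)]

theorem sq_eq_one_and_pow_four_eq_one_of_eq_mul {K : Type*} [Field K] {μ x y : K}
    (hx : x = μ * y) (hy : y = μ * x) (hxy : x * y = 1) :
    μ ^ 2 = 1 ∧ x ^ 4 = 1 ∧ y = x⁻¹ := by
  have hx0 : x ≠ 0 := left_ne_zero_of_mul_eq_one hxy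
  have hμ : μ ^ 2 = 1 := mul_right_cancel₀ hx0 (by linear_combination -hx - μ * hy)
  have hxsq : x ^ 2 = μ := by linear_combination x * hx + μ * hxy
  exact ⟨hμ, by rw [show x ^ 4 = (x ^ 2) ^ 2 by ring, hxsq, hμ],
    eq_inv_of_mul_eq_one_right hxy⟩

theorem stmt4_general (a b c d : PowerSeries ℂ) (hdet : a * d - b * c = 1)
    (T : LaurentSeries ℂ) (hT : T = (PowerSeries.X : PowerSeries ℂ))
    (μ : ℂ)
    (h : !![(a : LaurentSeries ℂ), (b : LaurentSeries ℂ);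
            (c : LaurentSeries ℂ), (d : LaurentSeries ℂ)] * !![0, T; T⁻¹, 0] =
         (μ • !![0, T; T⁻¹, 0]) * !![(a : LaurentSeries ℂ), (b : LaurentSeries ℂ);
            (c : LaurentSeries ℂ), (d : LaurentSeries ℂ)]) :
    μ ^ 2 = 1 ∧ PowerSeries.coeff (R := ℂ) 0 b = 0 ∧ PowerSeries.coeff (R := ℂ) 1 b = 0 ∧
      ∃ lam u : ℂ, lam ^ 4 = 1 ∧
        !![PowerSeries.coeff (R := ℂ) 0 a, PowerSeries.coeff (R := ℂ) 0 b;
           PowerSeries.coeff (R := ℂ) 0 c, PowerSeries.coeff (R := ℂ) 0 d] = !![lam, 0; u, lam⁻¹] := by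
  have hT0 : T ≠ 0 := by
    rw [hT]; exact (map_ne_zero_iff _ HahnSeries.ofPowerSeries_injective).mpr X_ne_zero
  have hJ : μ • !![0, T; T⁻¹, 0] = (HahnSeries.C μ : LaurentSeries ℂ) • !![0, T; T⁻¹, 0] := by
    ext i j; simp
  obtain ⟨hA, hD, hB⟩ := eq_mul_of_mul_antidiag_eq_smul_antidiag_mul hT0 (hJ ▸ h)
  have had : a = C μ * d := HahnSeries.ofPowerSeries_injective (by rw [coe_mul, coe_C]; exact hA)
  have hda : d = C μ * a := HahnSeries.ofPowerSeries_injective (by rw [coe_mul, coe_C]; exact hD)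
  have hbc : b = C μ * X ^ 2 * c :=
    HahnSeries.ofPowerSeries_injective (by rw [hB, hT]; push_cast; rw [coe_C])
  have hb : ∀ n < 2, coeff n b = 0 := fun n hn => hbc ▸ coeff_mul_X_sq_mul_of_lt_two _ c hn
  have hdet0 : coeff 0 a * coeff 0 d = 1 := by
    simpa only [map_sub, map_mul, map_one, ← coeff_zero_eq_constantCoeff_apply,
      hb 0 two_pos, zero_mul, sub_zero] using congrArg constantCoeff hdet
  obtain ⟨hμ, ha4, hd0⟩ := sq_eq_one_and_pow_four_eq_one_of_eq_mul
    (by simpa using congrArg (coeff 0) had) (by simpa using congrArg (coeff 0) hda) hdet0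
  refine ⟨hμ, hb 0 two_pos, hb 1 one_lt_two, coeff 0 a, coeff 0 c, ha4, ?_⟩
  rw [hb 0 two_pos, hd0]

/-- If `γ(t) ∈ SL(2, ℂ[[t]])` satisfies
`γ(t) * !![0, t; t⁻¹, 0] = μ • !![0, t; t⁻¹, 0] * γ(t)` for some `μ ∈ ℂ*`
(computed over the field of formal Laurent series), then `μ² = 1`, the first
two coefficients of `b` vanish, and the limit `γ(0)` belongs to
`U₄ = {!![λ, 0; u, λ⁻¹] : u ∈ ℂ, λ⁴ = 1}`. -/
theorem stmt4 (a b c d : PowerSeries ℂ) (hdet : a * d - b * c = 1)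
    (T : LaurentSeries ℂ) (hT : T = (PowerSeries.X : PowerSeries ℂ))
    (μ : ℂ) (hμ : μ ≠ 0)
    (h : !![(a : LaurentSeries ℂ), (b : LaurentSeries ℂ);
            (c : LaurentSeries ℂ), (d : LaurentSeries ℂ)] * !![0, T; T⁻¹, 0] =
         (μ • !![0, T; T⁻¹, 0]) * !![(a : LaurentSeries ℂ), (b : LaurentSeries ℂ);
            (c : LaurentSeries ℂ), (d : LaurentSeries ℂ)]) :
    μ ^ 2 = 1 ∧ PowerSeries.coeff (R := ℂ) 0 b = 0 ∧ PowerSeries.coeff (R := ℂ) 1 b = 0 ∧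
      ∃ lam u : ℂ, lam ^ 4 = 1 ∧
        !![PowerSeries.coeff (R := ℂ) 0 a, PowerSeries.coeff (R := ℂ) 0 b;
           PowerSeries.coeff (R := ℂ) 0 c, PowerSeries.coeff (R := ℂ) 0 d] = !![lam, 0; u, lam⁻¹] :=
  stmt4_general a b c d hdet T hT μ h
end
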